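/- arXiv:2409.06475 — 3 statements merged into one kernel-verified Lean document; each statement's English description precedes it below -/
import Mathlib

section
/- Let X be a set equipped with the inductive-limit (final) topology with respect to an increasing sequence of subsets Z₁ ⊆ Z₂ ⊆ ⋯ covering X, each Zᵢ carrying a Noetherian topology and each Zᵢ closed in Z_{i+1}. Then every closed subset of X has at most countably many connected components. -/
/-!
A Noetherian space has finitely many irreducible components, and each of them lies in a
connected component, so it has finitely many connected components. The set `C` is
covered by the countably many Noetherian subspaces `C ∩ Zᵢ`, and every connected component of
`C` contains the image of a connected component of one of them.
-/

open Set TopologicalSpace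

instance TopologicalSpace.NoetherianSpace.finite_connectedComponents {α : Type*}
    [TopologicalSpace α] [NoetherianSpace α] : Finite (ConnectedComponents α) := by
  have : Finite (irreducibleComponents α) := NoetherianSpace.finite_irreducibleComponents.to_subtype
  choose point point_mem using fun s : irreducibleComponents α => s.2.1.1
  refine Finite.of_surjective (fun s => ConnectedComponents.mk (point s)) fun c => ?_
  obtain ⟨x, rfl⟩ := ConnectedComponents.surjective_coe c
  let s : irreducibleComponents α :=
    ⟨irreducibleComponent x, irreducibleComponent_mem_irreducibleComponents x⟩
  have hs : irreducibleComponent x ⊆ connectedComponent x :=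
    isIrreducible_irreducibleComponent.isPreirreducible.isPreconnected.subset_connectedComponent
      mem_irreducibleComponent
  exact ⟨s, ConnectedComponents.coe_eq_coe'.mpr (hs (point_mem s))⟩

theorem countable_connectedComponents_of_iUnion_range_eq_univ {X ι : Type*}
    [TopologicalSpace X] [Countable ι] {Y : ι → Type*} [∀ i, TopologicalSpace (Y i)]
    [∀ i, Countable (ConnectedComponents (Y i))] {f : ∀ i, Y i → X} (hf : ∀ i, Continuous (f i))
    (hcover : ⋃ i, range (f i) = univ) : Countable (ConnectedComponents X) := by
  refine Function.Surjective.countable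
    (f := fun p : Σ i, ConnectedComponents (Y i) => (hf p.1).connectedComponentsMap p.2)
    fun c => ?_
  obtain ⟨x, rfl⟩ := ConnectedComponents.surjective_coe c
  obtain ⟨i, y, rfl⟩ := mem_iUnion.mp (hcover ▸ mem_univ x)
  exact ⟨⟨i, ConnectedComponents.mk y⟩, (hf i).connectedComponentsMap_mk y⟩

theorem stmt5_general {X : Type*} [TopologicalSpace X] (Z : ℕ → Set X)
    (hcover : ⋃ i, Z i = Set.univ)
    (hNoeth : ∀ i, TopologicalSpace.NoetherianSpace (Z i))
    (C : Set X) :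
    Countable (ConnectedComponents C) := by
  refine countable_connectedComponents_of_iUnion_range_eq_univ
    (f := fun i (z : (Subtype.val ⁻¹' C : Set (Z i))) => (⟨z.1.1, z.2⟩ : C))
    (fun i => (continuous_subtype_val.comp continuous_subtype_val).subtype_mk _) ?_
  refine eq_univ_of_forall fun x => ?_
  obtain ⟨i, hi⟩ := mem_iUnion.mp (hcover ▸ mem_univ x.1)
  exact mem_iUnion.mpr ⟨i, ⟨⟨x.1, hi⟩, x.2⟩, rfl⟩

/-- Let `X` be a set with the inductive-limit (final) topology with
respect to an increasing sequence of subsets `Z 1 ⊆ Z 2 ⊆ ⋯` covering `X`, each `Z i`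
carrying a Noetherian (subspace) topology and each `Z i` closed in `Z (i+1)`.  Then every
closed subset of `X` has at most countably many connected components. -/
theorem stmt5 {X : Type*} [TopologicalSpace X] (Z : ℕ → Set X)
    (hmono : Monotone Z) (hcover : ⋃ i, Z i = Set.univ)
    (hsucc_closed : ∀ i, IsClosed ((Set.inclusion (hmono (Nat.le_succ i))) ''
      (Set.univ : Set (Z i)) : Set (Z (i + 1))))
    (hNoeth : ∀ i, TopologicalSpace.NoetherianSpace (Z i))
    (hfinal : ∀ A : Set X, (∀ i, IsClosed ((↑) ⁻¹' A : Set (Z i))) → IsClosed A)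
    (C : Set X) (hC : IsClosed C) :
    Countable (ConnectedComponents C) :=
  stmt5_general Z hcover hNoeth C
end

section
/- Let V be an affine variety over an algebraically closed field k and let K be an algebraically closed field extension of k. The natural map from the k-rational points of V to the K-points of the base change V ×_k K, sending a maximal ideal 𝔪 of k[V] to the maximal ideal 𝔪·(k[V] ⊗_k K), is a homeomorphism onto its image with respect to the Zariski topologies. -/
/-!
By the Nullstellensatz a maximal ideal `𝔪` of `A` is the kernel of a `k`-point `φ : A → k`, and
then `𝔪 · (A ⊗ₖ K)` is the kernel of the surjection `φ ⊗ id : A ⊗ₖ K → K`, hence maximal.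
Writing elements of `A ⊗ₖ K` in the `A`-basis coming from a `k`-basis of `K`, an element lies in
`𝔪 · (A ⊗ₖ K)` iff all its coordinates lie in `𝔪`; so the preimage of a zero locus is a zero
locus, and `η` is continuous. Since `A ⊗ₖ K` is faithfully flat over `A`, contracting back to `A`
is a continuous left inverse of `η`, which makes `η` an embedding.
-/

open TensorProduct

theorem Module.Basis.mem_map_algebraMap_iff_repr_mem {A B ι : Type*} [CommRing A] [CommRing B]
    [Algebra A B] (b : Module.Basis ι A B) (I : Ideal A) (x : B) :
    x ∈ I.map (algebraMap A B) ↔ ∀ i, b.repr x i ∈ I := by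
  constructor
  · intro hx i
    rw [← Submodule.restrictScalars_mem A, ← Ideal.smul_top_eq_map] at hx
    refine Submodule.smul_induction_on (p := fun y => b.repr y i ∈ I) hx ?_ ?_
    · intro a ha y _
      simpa using I.mul_mem_right _ ha
    · intro y z hy hz
      simpa using I.add_mem hy hz
  · intro h
    rw [← b.linearCombination_repr x, Finsupp.linearCombination_apply]
    refine Ideal.sum_mem _ fun i _ => ?_
    simpa only [Algebra.smul_def] using Ideal.mul_mem_right (b i) _ (Ideal.mem_map_of_mem _ (h i))

theorem Module.Basis.continuous_of_asIdeal_eq_map {A B ι X : Type*} [CommRing A] [CommRing B]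
    [Algebra A B] [TopologicalSpace X] (b : Module.Basis ι A B) {f : X → PrimeSpectrum A}
    (hf : Continuous f) {g : X → PrimeSpectrum B}
    (hg : ∀ x, (g x).asIdeal = (f x).asIdeal.map (algebraMap A B)) : Continuous g := by
  refine continuous_iff_isClosed.mpr fun C hC => ?_
  obtain ⟨s, rfl⟩ := (PrimeSpectrum.isClosed_iff_zeroLocus C).mp hC
  have : g ⁻¹' PrimeSpectrum.zeroLocus s =
      f ⁻¹' PrimeSpectrum.zeroLocus (⋃ y ∈ s, Set.range (b.repr y)) := by
    ext x
    simp only [Set.mem_preimage, PrimeSpectrum.mem_zeroLocus, hg, Set.iUnion₂_subset_iff,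
      Set.range_subset_iff, SetLike.mem_coe]
    exact forall₂_congr fun y _ => b.mem_map_algebraMap_iff_repr_mem _ y
  rw [this]
  exact (PrimeSpectrum.isClosed_zeroLocus _).preimage hf

theorem exists_algHom_ker_eq_of_isMaximal {k A : Type*} [Field k] [IsAlgClosed k] [CommRing A]
    [Algebra k A] [Algebra.FiniteType k A] (𝔪 : Ideal A) [𝔪.IsMaximal] :
    ∃ φ : A →ₐ[k] k, RingHom.ker φ = 𝔪 := by
  let := Ideal.Quotient.field 𝔪
  have : Module.Finite k (A ⧸ 𝔪) := finite_of_finite_type_of_isJacobsonRing k _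
  let e : k ≃ₐ[k] A ⧸ 𝔪 :=
    AlgEquiv.ofBijective (Algebra.ofId k _) IsAlgClosed.algebraMap_bijective_of_isIntegral
  refine ⟨e.symm.toAlgHom.comp (Ideal.Quotient.mkₐ k 𝔪), ?_⟩
  ext a
  simp [RingHom.mem_ker, Ideal.Quotient.eq_zero_iff_mem]

theorem Ideal.isMaximal_map_algebraMap_tensorProduct {k A : Type*} [Field k] [IsAlgClosed k]
    [CommRing A] [Algebra k A] [Algebra.FiniteType k A] (K : Type*) [Field K] [Algebra k K]
    (𝔪 : Ideal A) [𝔪.IsMaximal] : (𝔪.map (algebraMap A (A ⊗[k] K))).IsMaximal := by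
  obtain ⟨φ, rfl⟩ := exists_algHom_ker_eq_of_isMaximal (k := k) 𝔪
  let ψ : A ⊗[k] K →ₐ[k] K :=
    (Algebra.TensorProduct.lid k K).toAlgHom.comp (Algebra.TensorProduct.map φ (.id k K))
  have hψ : Function.Surjective ψ := fun c => ⟨1 ⊗ₜ c, by simp [ψ]⟩
  have hker : RingHom.ker ψ = (RingHom.ker φ).map (algebraMap A (A ⊗[k] K)) :=
    (RingHom.ker_comp_of_injective _ (Algebra.TensorProduct.lid k K).injective).trans
      (Algebra.TensorProduct.rTensor_ker φ fun c => ⟨algebraMap k A c, φ.commutes c⟩)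
  exact hker ▸ RingHom.ker_isMaximal_of_surjective ψ hψ

theorem stmt9_general {k : Type*} [Field k] [IsAlgClosed k]
    (A : Type*) [CommRing A] [Algebra k A] [Algebra.FiniteType k A]
    (K : Type*) [Field K] [Algebra k K] :
    ∃ η : {p : PrimeSpectrum A // p.asIdeal.IsMaximal} →
        {q : PrimeSpectrum (A ⊗[k] K) // q.asIdeal.IsMaximal},
      (∀ 𝔪, (η 𝔪).1.asIdeal =
          Ideal.map (algebraMap A (A ⊗[k] K)) 𝔪.1.asIdeal) ∧
      Topology.IsEmbedding η := by
  let η : {p : PrimeSpectrum A // p.asIdeal.IsMaximal} →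
      {q : PrimeSpectrum (A ⊗[k] K) // q.asIdeal.IsMaximal} := fun 𝔪 =>
    have := 𝔪.2
    have hmax := Ideal.isMaximal_map_algebraMap_tensorProduct (k := k) K 𝔪.1.asIdeal
    ⟨⟨_, hmax.isPrime⟩, hmax⟩
  have hη : Continuous η :=
    (((Module.Basis.ofVectorSpace k K).baseChange A).continuous_of_asIdeal_eq_map
      continuous_subtype_val fun _ => rfl).subtype_mk _
  have hcomap : Continuous fun q : {q : PrimeSpectrum (A ⊗[k] K) // q.asIdeal.IsMaximal} =>
      PrimeSpectrum.comap (algebraMap A (A ⊗[k] K)) q.1 :=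
    (PrimeSpectrum.continuous_comap _).comp continuous_subtype_val
  have hleft : (fun q => PrimeSpectrum.comap (algebraMap A (A ⊗[k] K)) q.1) ∘ η = Subtype.val :=
    funext fun 𝔪 => PrimeSpectrum.ext (Ideal.comap_map_eq_self_of_faithfullyFlat _)
  exact ⟨η, fun _ => rfl, .of_comp hη hcomap (hleft ▸ .subtypeVal)⟩

/-- Let `V` be an affine variety over an algebraically closed field `k`
(with coordinate ring `A = k[V]`, a finitely generated reduced `k`-algebra) and let `K`
be an algebraically closed field extension of `k`.  The natural map from the `k`-rational
points of `V` (= maximal ideals of `A`) to the `K`-points of the base change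
`V ×ₖ K` (= maximal ideals of `A ⊗ₖ K`), sending `𝔪` to `𝔪 · (A ⊗ₖ K)`, is well
defined and is a homeomorphism onto its image for the Zariski topologies. -/
theorem stmt9 {k : Type*} [Field k] [IsAlgClosed k]
    (A : Type*) [CommRing A] [Algebra k A] [Algebra.FiniteType k A] [IsReduced A]
    (K : Type*) [Field K] [Algebra k K] [IsAlgClosed K] :
    ∃ η : {p : PrimeSpectrum A // p.asIdeal.IsMaximal} →
        {q : PrimeSpectrum (A ⊗[k] K) // q.asIdeal.IsMaximal},
      (∀ 𝔪, (η 𝔪).1.asIdeal =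
          Ideal.map (algebraMap A (A ⊗[k] K)) 𝔪.1.asIdeal) ∧
      Topology.IsEmbedding η :=
  stmt9_general A K
end

section
/- Let X be an irreducible variety over an algebraically closed field and let G ⊆ Bir(X) be a subgroup that is also an algebraic subset (the image of a morphism from a variety). Then G is closed in Bir(X), and for every open dense subset U ⊆ G one has U ∘ U = G. -/
open scoped Pointwise

/-!
Translations and inversion are continuous, so the closure `H` of `G` is again a subgroup. If `U` is
open and dense in a subgroup `H` and `h ∈ H`, then `h U⁻¹` is open and dense in `H` as well, so it
meets `U`, which writes `h` as a product of two elements of `U`. Applied to `H = closure G` and the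
open dense subset of `closure G` lying in `G` that `G` has as an algebraic subset, this gives
`closure G ⊆ G`.
-/

section SemitopologicalGroup

variable {G : Type*} [Group G] [TopologicalSpace G] [SeparatelyContinuousMul G] [ContinuousInv G]

/-- Unlike `Subgroup.topologicalClosure`, this needs only separately continuous multiplication. -/
def Subgroup.semitopologicalClosure (H : Subgroup G) : Subgroup G where
  carrier := _root_.closure H
  one_mem' := _root_.subset_closure H.one_mem
  mul_mem' {a b} ha hb := by
    have left_mul : ∀ g ∈ H, g * b ∈ _root_.closure H := fun g hg =>
      map_mem_closure (continuous_const_mul g) hb fun x hx => H.mul_mem hg hx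
    simpa only [closure_closure] using map_mem_closure (continuous_mul_const b) ha left_mul
  inv_mem' ha := map_mem_closure continuous_inv ha fun _ hx => H.inv_mem hx

theorem Subgroup.mul_self_eq_of_dense_of_eq_inter_isOpen (H : Subgroup G) {U W : Set G}
    (hW : IsOpen W) (hU : U = W ∩ H) (hdense : (H : Set G) ⊆ _root_.closure U) :
    U * U = H := by
  have hUH : U ⊆ H := hU ▸ Set.inter_subset_right
  refine (Set.mul_subset_iff.2 fun a ha b hb => H.mul_mem (hUH ha) (hUH hb)).antisymm ?_
  intro h hh
  obtain ⟨x, hx⟩ : U.Nonempty := by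
    simpa using mem_closure_iff.1 (hdense hh) Set.univ isOpen_univ trivial
  -- `h x⁻¹ ∈ H` lies in the open set of those `u` with `u⁻¹ h ∈ W`, which therefore meets `U`.
  have hopen : IsOpen ((fun u => u⁻¹ * h) ⁻¹' W) := hW.preimage (continuous_inv.mul_const h)
  have hxW : x ∈ W := (hU ▸ hx).1
  obtain ⟨u, huW, hu⟩ := mem_closure_iff.1 (hdense (H.mul_mem hh (H.inv_mem (hUH hx)))) _ hopen
    (by simpa [mul_assoc] using hxW)
  have hw : u⁻¹ * h ∈ U := hU ▸ ⟨huW, H.mul_mem (H.inv_mem (hUH hu)) hh⟩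
  simpa using Set.mul_mem_mul hu hw

end SemitopologicalGroup

theorem stmt17_general {𝔅 : Type*} [Group 𝔅] [TopologicalSpace 𝔅]
    (IsAlg : Set 𝔅 → Prop)
    (hmul_left : ∀ g : 𝔅, IsHomeomorph (fun x => g * x))
    (hmul_right : ∀ g : 𝔅, IsHomeomorph (fun x => x * g))
    (hinv_homeo : IsHomeomorph (fun x : 𝔅 => x⁻¹))
    (hconstr : ∀ S, IsAlg S → ∃ O : Set 𝔅, O ⊆ S ∧
      (∃ W : Set 𝔅, IsOpen W ∧ O = W ∩ closure S) ∧ closure O = closure S)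
    (G : Subgroup 𝔅) (hGalg : IsAlg (G : Set 𝔅)) :
    IsClosed (G : Set 𝔅) ∧
      ∀ U : Set 𝔅, U ⊆ (G : Set 𝔅) →
        (∃ W : Set 𝔅, IsOpen W ∧ U = W ∩ (G : Set 𝔅)) →
        (G : Set 𝔅) ⊆ closure U →
        U * U = (G : Set 𝔅) := by
  have : SeparatelyContinuousMul 𝔅 :=
    ⟨(hmul_left _).continuous, (hmul_right _).continuous⟩
  have : ContinuousInv 𝔅 := ⟨hinv_homeo.continuous⟩
  obtain ⟨O, hOG, ⟨W, hW, hOW⟩, hOcl⟩ := hconstr G hGalg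
  have hclosure_eq : O * O = closure (G : Set 𝔅) :=
    G.semitopologicalClosure.mul_self_eq_of_dense_of_eq_inter_isOpen hW hOW hOcl.ge
  have hOO : O * O ⊆ G := Set.mul_subset_iff.2 fun a ha b hb => G.mul_mem (hOG ha) (hOG hb)
  refine ⟨closure_subset_iff_isClosed.1 (hclosure_eq ▸ hOO), ?_⟩
  rintro U - ⟨W', hW', hUW'⟩ hdense
  exact G.mul_self_eq_of_dense_of_eq_inter_isOpen hW' hUW' hdense

/-- Abstract model of `Bir(X)` for an irreducible variety `X`: a group
`𝔅` with a (Zariski) topology and a predicate `IsAlg : Set 𝔅 → Prop` for its algebraic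
subsets, satisfying the known facts listed in the context:
* left and right translations (and inversion) are homeomorphisms;
* the closure of an algebraic subset is algebraic;
* every algebraic subset contains a subset which is open and dense in its closure
  (images of constructible sets under morphisms to `Bir(X)` are constructible).

If `G ⊆ 𝔅` is a subgroup which is also an algebraic subset, then `G` is closed in `𝔅`,
and for every subset `U ⊆ G` which is open and dense in `G` one has `U * U = G`. -/
theorem stmt17 {𝔅 : Type*} [Group 𝔅] [TopologicalSpace 𝔅]
    (IsAlg : Set 𝔅 → Prop)
    (hmul_left : ∀ g : 𝔅, IsHomeomorph (fun x => g * x))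
    (hmul_right : ∀ g : 𝔅, IsHomeomorph (fun x => x * g))
    (hinv_homeo : IsHomeomorph (fun x : 𝔅 => x⁻¹))
    (hclosure : ∀ S, IsAlg S → IsAlg (closure S))
    (hconstr : ∀ S, IsAlg S → ∃ O : Set 𝔅, O ⊆ S ∧
      (∃ W : Set 𝔅, IsOpen W ∧ O = W ∩ closure S) ∧ closure O = closure S)
    (G : Subgroup 𝔅) (hGalg : IsAlg (G : Set 𝔅)) :
    IsClosed (G : Set 𝔅) ∧
      ∀ U : Set 𝔅, U ⊆ (G : Set 𝔅) →
        (∃ W : Set 𝔅, IsOpen W ∧ U = W ∩ (G : Set 𝔅)) →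
        (G : Set 𝔅) ⊆ closure U →
        U * U = (G : Set 𝔅) :=
  stmt17_general IsAlg hmul_left hmul_right hinv_homeo hconstr G hGalg
end
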